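/- arXiv:2102.10092 — 2 statements merged into one kernel-verified Lean document; each statement's English description precedes it below -/
import Mathlib

section
/- Let X be a nonempty shift space over a finite alphabet A. If every bispecial factor w ∈ L(X) satisfies #E(w) − #E^-(w) − #E^+(w) + 1 = 0, then p_X(n) = (p_X(1) − 1)·n + 1 for every n ≥ 0. -/
/-! Summing over the factors `w` of length `n`,
`p(n+2) - 2 p(n+1) + p(n) = ∑_w (#E(w) - #E⁻(w) - #E⁺(w) + 1)`, because every factor of length
`n + 1` (resp. `n + 2`) is uniquely a one-sided (resp. two-sided) extension of one of length `n`.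
A factor that is not bispecial has a single left or a single right extension, so its summand
vanishes as well. Hence `p` has zero second difference and is affine, with `p(0) = 1`. -/

open Classical

/-! ### Basic shift-space definitions -/

/-- The shift map `S` on bi-infinite words over `A`. -/
def shiftMap (A : Type*) : (ℤ → A) → (ℤ → A) := fun x n => x (n + 1)

/-- The product topology on `ℤ → A`, each copy of `A` carrying the discrete topology. -/
def seqTop (A : Type*) : TopologicalSpace (ℤ → A) :=
  @Pi.topologicalSpace ℤ (fun _ => A) (fun _ => ⊥)

/-- A shift space: a closed, shift-invariant subset of `A^ℤ`. -/
def IsShiftSpace {A : Type*} (X : Set (ℤ → A)) : Prop :=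
  @IsClosed _ (seqTop A) X ∧ shiftMap A '' X = X

/-- A minimal shift space: the only closed shift-invariant subsets are `∅` and `X`. -/
def IsMinimalShift {A : Type*} (X : Set (ℤ → A)) : Prop :=
  IsShiftSpace X ∧
    ∀ Y : Set (ℤ → A), Y ⊆ X → @IsClosed _ (seqTop A) Y → shiftMap A '' Y = Y →
      Y = ∅ ∨ Y = X

/-- The finite word `w` occurs as a factor of the bi-infinite word `x`. -/
def occursIn {A : Type*} (w : List A) (x : ℤ → A) : Prop :=
  ∃ i : ℤ, w = List.ofFn (fun k : Fin w.length => x (i + (k.val : ℤ)))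

/-- The language of `X`: all finite factors of elements of `X`. -/
def language {A : Type*} (X : Set (ℤ → A)) : Set (List A) :=
  {w | ∃ x ∈ X, occursIn w x}

/-- The factor complexity `p_X(n)`. -/
noncomputable def complexity {A : Type*} (X : Set (ℤ → A)) (n : ℕ) : ℕ :=
  {w ∈ language X | w.length = n}.ncard

/-- Left extensions `E⁻(w)` of `w` in `X`. -/
def extLeft {A : Type*} (X : Set (ℤ → A)) (w : List A) : Set A :=
  {a | (a :: w) ∈ language X}

/-- Right extensions `E⁺(w)` of `w` in `X`. -/
def extRight {A : Type*} (X : Set (ℤ → A)) (w : List A) : Set A :=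
  {b | (w ++ [b]) ∈ language X}

/-- Bi-extensions `E(w)` of `w` in `X`. -/
def extBoth {A : Type*} (X : Set (ℤ → A)) (w : List A) : Set (A × A) :=
  {p | (p.1 :: (w ++ [p.2])) ∈ language X}

def LeftSpecial {A : Type*} (X : Set (ℤ → A)) (w : List A) : Prop :=
  2 ≤ (extLeft X w).ncard

def RightSpecial {A : Type*} (X : Set (ℤ → A)) (w : List A) : Prop :=
  2 ≤ (extRight X w).ncard

def Bispecial {A : Type*} (X : Set (ℤ → A)) (w : List A) : Prop :=
  LeftSpecial X w ∧ RightSpecial X w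

/-! ### Extension graphs -/

/-- The bipartite graph on `A ⊕ A` (left copy ⊕ right copy) whose edges are given
by a set `E` of pairs. -/
def pairGraph {A : Type*} (E : Set (A × A)) : SimpleGraph (A ⊕ A) :=
  SimpleGraph.fromRel (fun u v => ∃ a b, u = Sum.inl a ∧ v = Sum.inr b ∧ (a, b) ∈ E)

/-- The vertices of `A ⊕ A` incident to some edge of `E`. -/
def pairSupport {A : Type*} (E : Set (A × A)) : Set (A ⊕ A) :=
  Sum.inl '' {a | ∃ b, (a, b) ∈ E} ∪ Sum.inr '' {b | ∃ a, (a, b) ∈ E}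

/-- The vertex set of the extension graph of `w`: `E⁻(w) ⊔ E⁺(w)`. -/
def extVertices {A : Type*} (X : Set (ℤ → A)) (w : List A) : Set (A ⊕ A) :=
  Sum.inl '' extLeft X w ∪ Sum.inr '' extRight X w

/-- `w` is dendric in `X`: its extension graph is a tree. -/
def IsDendric {A : Type*} (X : Set (ℤ → A)) (w : List A) : Prop :=
  ((pairGraph (extBoth X w)).induce (extVertices X w)).IsTree

/-- A dendric shift: a shift space all of whose factors are dendric. -/
def IsDendricShift {A : Type*} (X : Set (ℤ → A)) : Prop :=
  IsShiftSpace X ∧ ∀ w ∈ language X, IsDendric X w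

/-- The graph with edge set `E` and vertices those incident to an edge, is a tree. -/
def restrictedIsTree {A : Type*} (E : Set (A × A)) : Prop :=
  ((pairGraph E).induce (pairSupport E)).IsTree

/-- An ordinary bispecial factor. -/
def Ordinary {A : Type*} (X : Set (ℤ → A)) (w : List A) : Prop :=
  Bispecial X w ∧ ∃ p ∈ extBoth X w, ∀ q ∈ extBoth X w, q.1 = p.1 ∨ q.2 = p.2

/-- An Arnoux-Rauzy shift over `A`. -/
def IsArnouxRauzy {A : Type*} (X : Set (ℤ → A)) : Prop :=
  IsMinimalShift X ∧ ∀ n : ℕ, 1 ≤ n →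
    (∃! u : List A, u ∈ language X ∧ u.length = n ∧ LeftSpecial X u) ∧
    (∃! v : List A, v ∈ language X ∧ v.length = n ∧ RightSpecial X v) ∧
    (∀ u ∈ language X, u.length = n → LeftSpecial X u → extLeft X u = Set.univ) ∧
    (∀ v ∈ language X, v.length = n → RightSpecial X v → extRight X v = Set.univ)

/-! ### Morphisms -/

/-- Apply a morphism (given by its images of letters) to a finite word. -/
def applyWord {A B : Type*} (σ : A → List B) (w : List A) : List B :=
  (w.map σ).flatten

def NonErasing {A B : Type*} (σ : A → List B) : Prop := ∀ a, σ a ≠ []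

/-- `σ` is strongly left proper with first letter `ℓ`: every `σ a` starts with `ℓ`
and `ℓ` occurs exactly once in `σ a`. -/
def StronglyLeftProper {A B : Type*} (σ : A → List B) (ℓ : B) : Prop :=
  ∀ a, ∃ w : List B, σ a = ℓ :: w ∧ ℓ ∉ w

/-- Apply a (non-erasing) morphism to a bi-infinite word, anchored so that
`σ (x 0)` starts at index `0`. -/
noncomputable def applyPoint {A B : Type*} [Nonempty B] (σ : A → List B) (x : ℤ → A) :
    ℤ → B := fun m =>
  letI : Inhabited B := Classical.inhabited_of_nonempty inferInstance
  if 0 ≤ m then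
    (applyWord σ (List.ofFn (fun k : Fin (m.toNat + 1) => x (k.val : ℤ)))).getD m.toNat default
  else
    let K := (-m).toNat
    let L := applyWord σ (List.ofFn (fun k : Fin K => x ((k.val : ℤ) - (K : ℤ))))
    L.getD ((L.length : ℤ) + m).toNat default

/-- The image of a shift space `X` under the morphism `σ`:
`Y = {S^k σ(x) : x ∈ X, 0 ≤ k < |σ(x₀)|}`. -/
def shiftImage {A B : Type*} [Nonempty B] (σ : A → List B) (X : Set (ℤ → A)) :
    Set (ℤ → B) :=
  {y | ∃ x ∈ X, ∃ k : ℕ, k < (σ (x 0)).length ∧ y = (shiftMap B)^[k] (applyPoint σ x)}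

/-- `u` is an extended image of `v` under the injective strongly left proper
morphism `σ` (with first letter `ℓ`). -/
def ExtendedImage {A B : Type*} [Nonempty B] (σ : A → List B) (ℓ : B)
    (X : Set (ℤ → A)) (v : List A) (u : List B) : Prop :=
  u ∈ language (shiftImage σ X) ∧ u ≠ [] ∧ ℓ ∈ u ∧ v ∈ language X ∧
    ∃ (s p : List B) (a b : A), u = s ++ applyWord σ v ++ p ∧ (a, b) ∈ extBoth X v ∧
      s <:+ σ a ∧ s ≠ σ a ∧ p ≠ [] ∧ p <+: σ b

/-- `σ` is dendric preserving for the factor `v` of `X`: every bispecial extended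
image of `v` is dendric in the image shift. -/
def DendricPreservingFor {A B : Type*} [Nonempty B] (σ : A → List B) (ℓ : B)
    (X : Set (ℤ → A)) (v : List A) : Prop :=
  ∀ u, ExtendedImage σ ℓ X v u → Bispecial (shiftImage σ X) u →
    IsDendric (shiftImage σ X) u

/-! ### Longest common prefixes and suffixes -/

/-- Longest common prefix of two words. -/
def lcp {B : Type*} [DecidableEq B] : List B → List B → List B
  | a :: l, b :: m => if a = b then a :: lcp l m else []
  | _, _ => []

/-- Longest common suffix of two words. -/
def lcs {B : Type*} [DecidableEq B] (l m : List B) : List B :=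
  (lcp l.reverse m.reverse).reverse

/-- `T⁻(σ)`: longest common suffixes of images of distinct letters. -/
def Tminus {A B : Type*} [DecidableEq B] (σ : A → List B) : Set (List B) :=
  {s | ∃ a₁ a₂ : A, a₁ ≠ a₂ ∧ s = lcs (σ a₁) (σ a₂)}

/-- `T⁺(σ)`: longest common prefixes of images of distinct letters. -/
def Tplus {A B : Type*} [DecidableEq B] (σ : A → List B) : Set (List B) :=
  {p | ∃ b₁ b₂ : A, b₁ ≠ b₂ ∧ p = lcp (σ b₁) (σ b₂)}

/-- `T⁻_v(σ)`. -/
def TminusV {A B : Type*} [DecidableEq B] (σ : A → List B) (X : Set (ℤ → A))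
    (v : List A) : Set (List B) :=
  {s | ∃ a₁ a₂ : A, a₁ ≠ a₂ ∧ a₁ ∈ extLeft X v ∧ a₂ ∈ extLeft X v ∧
    s = lcs (σ a₁) (σ a₂)}

/-- `T⁺_v(σ)`. -/
def TplusV {A B : Type*} [DecidableEq B] (σ : A → List B) (X : Set (ℤ → A))
    (v : List A) : Set (List B) :=
  {p | ∃ b₁ b₂ : A, b₁ ≠ b₂ ∧ b₁ ∈ extRight X v ∧ b₂ ∈ extRight X v ∧
    p = lcp (σ b₁) (σ b₂)}

/-- `E⁻_{X,s}(v)`. -/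
def extLeftS {A B : Type*} (σ : A → List B) (X : Set (ℤ → A)) (v : List A)
    (s : List B) : Set A :=
  {a ∈ extLeft X v | s <:+ σ a}

/-- `E⁺_{X,p}(v)`. -/
def extRightP {A B : Type*} (σ : A → List B) (ℓ : B) (X : Set (ℤ → A)) (v : List A)
    (p : List B) : Set A :=
  {b ∈ extRight X v | p <+: (σ b ++ [ℓ])}

/-- `E_{X,s,p}(v)`. -/
def extBothSP {A B : Type*} (σ : A → List B) (ℓ : B) (X : Set (ℤ → A)) (v : List A)
    (s p : List B) : Set (A × A) :=
  {q ∈ extBoth X v | q.1 ∈ extLeftS σ X v s ∧ q.2 ∈ extRightP σ ℓ X v p}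

/-- `σ` is left-invariant: `T⁻(σ)` is a singleton. -/
def LeftInvariant {A B : Type*} [DecidableEq B] (σ : A → List B) : Prop :=
  ∃ s, Tminus σ = {s}

/-- `σ` is right-invariant: `T⁺(σ)` is a singleton. -/
def RightInvariant {A B : Type*} [DecidableEq B] (σ : A → List B) : Prop :=
  ∃ p, Tplus σ = {p}

/-! ### The sets `C⁻` and `C⁺` -/

/-- Edges of `E` not incident to the left vertex `a`. -/
def delLeft {A : Type*} (E : Set (A × A)) (a : A) : Set (A × A) := {p ∈ E | p.1 ≠ a}

/-- Edges of `E` not incident to the right vertex `b`. -/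
def delRight {A : Type*} (E : Set (A × A)) (b : A) : Set (A × A) := {p ∈ E | p.2 ≠ b}

/-- `C⁻_X(v)`: letters `a` whose deletion (as a left vertex, removing resulting
isolated vertices) disconnects the extension graph of `v`. -/
def Cminus {A : Type*} (X : Set (ℤ → A)) (v : List A) : Set A :=
  {a | ¬ ((pairGraph (delLeft (extBoth X v) a)).induce
      (pairSupport (delLeft (extBoth X v) a))).Preconnected}

/-- `C⁺_X(v)`. -/
def Cplus {A : Type*} (X : Set (ℤ → A)) (v : List A) : Set A :=
  {b | ¬ ((pairGraph (delRight (extBoth X v) b)).induce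
      (pairSupport (delRight (extBoth X v) b))).Preconnected}

/-- `C⁻(X) = ⋃_{v ∈ L(X)} C⁻_X(v)`. -/
def CminusShift {A : Type*} (X : Set (ℤ → A)) : Set A :=
  {a | ∃ v ∈ language X, a ∈ Cminus X v}

/-- `C⁺(X)`. -/
def CplusShift {A : Type*} (X : Set (ℤ → A)) : Set A :=
  {b | ∃ v ∈ language X, b ∈ Cplus X v}

/-! ### The ternary alphabet and the set `S₃` -/

/-- `α : 1↦1, 2↦12, 3↦13` (letters `1,2,3` are `0,1,2 : Fin 3`). -/
def mAlpha : Fin 3 → List (Fin 3) := ![[0], [0, 1], [0, 2]]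

/-- `β : 1↦1, 2↦12, 3↦132`. -/
def mBeta : Fin 3 → List (Fin 3) := ![[0], [0, 1], [0, 2, 1]]

/-- `γ : 1↦1, 2↦12, 3↦123`. -/
def mGamma : Fin 3 → List (Fin 3) := ![[0], [0, 1], [0, 1, 2]]

/-- `δ⁽ᵏ⁾ : 1↦1, 2↦123^k, 3↦123^{k+1}`. -/
def mDelta (k : ℕ) : Fin 3 → List (Fin 3) :=
  ![[0], [0, 1] ++ List.replicate k 2, [0, 1] ++ List.replicate (k + 1) 2]

/-- `ζ⁽ᵏ⁾ : 1↦13^k, 2↦12, 3↦13^{k+1}`. -/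
def mZeta (k : ℕ) : Fin 3 → List (Fin 3) :=
  ![0 :: List.replicate k 2, [0, 1], 0 :: List.replicate (k + 1) 2]

/-- `η : 1↦13, 2↦12, 3↦123`. -/
def mEta : Fin 3 → List (Fin 3) := ![[0, 2], [0, 1], [0, 1, 2]]

/-- The set `S₃` of morphisms. -/
def S3Set : Set (Fin 3 → List (Fin 3)) :=
  {mAlpha, mBeta, mGamma, mEta} ∪ {σ | ∃ k, 1 ≤ k ∧ (σ = mDelta k ∨ σ = mZeta k)}

/-- `S_LI = {α, γ}`. -/
def SLISet : Set (Fin 3 → List (Fin 3)) := {mAlpha, mGamma}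

/-- `S_RI = {α, β}`. -/
def SRISet : Set (Fin 3 → List (Fin 3)) := {mAlpha, mBeta}

/-- The morphism induced by a permutation of the alphabet. -/
def permMorph (π : Equiv.Perm (Fin 3)) : Fin 3 → List (Fin 3) := fun a => [π a]

/-- Composition of morphisms (as substitutions). -/
def compMorph {A B C : Type*} (τ : B → List C) (σ : A → List B) : A → List C :=
  fun a => applyWord τ (σ a)

/-- `Σ₃ T Σ₃` for a set `T` of morphisms of `A₃*`. -/
def SigmaSSigma (T : Set (Fin 3 → List (Fin 3))) : Set (Fin 3 → List (Fin 3)) :=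
  {σ | ∃ (π π' : Equiv.Perm (Fin 3)) (τ : Fin 3 → List (Fin 3)), τ ∈ T ∧
    σ = compMorph (permMorph π) (compMorph τ (permMorph π'))}

/-! ### S-adic representations -/

/-- `prodMorph σ m n = σ_m ∘ σ_{m+1} ∘ ⋯ ∘ σ_{m+n-1}` (as substitutions). -/
def prodMorph {A : Type*} (σ : ℕ → A → List A) : ℕ → ℕ → A → List A
  | _, 0 => fun a => [a]
  | m, n + 1 => compMorph (σ m) (prodMorph σ (m + 1) n)

/-- The language of level `n` of a directive sequence (0-indexed: `levelLang σ 0`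
is the language of level 1 of the paper). -/
def levelLang {A : Type*} (σ : ℕ → A → List A) (n : ℕ) : Set (List A) :=
  {w | ∃ (m : ℕ) (a : A), 0 < m ∧ w <:+: prodMorph σ n m a}

/-- The shift space `X_σ^{(n+1)}` generated by the language of level `n+1`. -/
def levelShift {A : Type*} (σ : ℕ → A → List A) (n : ℕ) : Set (ℤ → A) :=
  {x | ∀ w, occursIn w x → w ∈ levelLang σ n}

/-- The growth condition `max_a |σ_{[1,n)}(a)| → ∞`. -/
def SAdicGrowth {A : Type*} [Fintype A] (σ : ℕ → A → List A) : Prop :=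
  Filter.Tendsto (fun n => Finset.univ.sup fun a : A => (prodMorph σ 0 n a).length)
    Filter.atTop Filter.atTop

/-- `σ` is an S-adic representation of `X`. -/
def IsSAdicRep {A : Type*} [Fintype A] (σ : ℕ → A → List A) (X : Set (ℤ → A)) : Prop :=
  SAdicGrowth σ ∧ X = levelShift σ 0

/-- Primitivity of a directive sequence. -/
def PrimitiveSeq {A : Type*} (σ : ℕ → A → List A) : Prop :=
  ∀ n, ∃ m, 0 < m ∧ ∀ a b : A, a ∈ prodMorph σ n m b

/-- `X` is a shift space over `A₃`: every letter belongs to the language. -/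
def ShiftOver3 (X : Set (ℤ → Fin 3)) : Prop := ∀ a : Fin 3, [a] ∈ language X

/-- A minimal dendric shift over `A₃`. -/
def MinimalDendric3 (X : Set (ℤ → Fin 3)) : Prop :=
  IsMinimalShift X ∧ (∀ w ∈ language X, IsDendric X w) ∧ ShiftOver3 X

/-! ### Induced transformations -/

/-- `I` is recurrent for `T`. -/
def RecurrentSet {Ω : Type*} (T : Ω → Ω) (I : Set Ω) : Prop :=
  ∀ x ∈ I, ∃ n, 0 < n ∧ T^[n] x ∈ I

/-- First return time of `x` to `I` under `T`. -/
noncomputable def returnTime {Ω : Type*} (T : Ω → Ω) (I : Set Ω) (x : Ω) : ℕ :=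
  sInf {n | 0 < n ∧ T^[n] x ∈ I}

/-- The transformation induced by `T` on `I`. -/
noncomputable def inducedMap {Ω : Type*} (T : Ω → Ω) (I : Set Ω) : Ω → Ω :=
  fun x => T^[returnTime T I x] x

/-- The Arnoux-Rauzy morphism `α_a : a ↦ a, b ↦ ab (b ≠ a)`. -/
def arAlpha {A : Type*} [DecidableEq A] (a : A) : A → List A :=
  fun b => if b = a then [a] else [a, b]

/-- The Arnoux-Rauzy morphism `ᾱ_a : a ↦ a, b ↦ ba (b ≠ a)`. -/
def arAlphaBar {A : Type*} [DecidableEq A] (a : A) : A → List A :=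
  fun b => if b = a then [a] else [b, a]

section Factors

variable {A : Type*}

def window (x : ℤ → A) (i : ℤ) (m : ℕ) : List A :=
  List.ofFn fun k : Fin m => x (i + k)

@[simp]
lemma length_window (x : ℤ → A) (i : ℤ) (m : ℕ) : (window x i m).length = m := by
  simp [window]

lemma window_add (x : ℤ → A) (i : ℤ) (m k : ℕ) :
    window x i (m + k) = window x i m ++ window x (i + m) k := by
  simp only [window, List.ofFn_add, Fin.val_castLE, Fin.val_natAdd, Nat.cast_add, add_assoc]

lemma window_succ (x : ℤ → A) (i : ℤ) (m : ℕ) :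
    window x i (m + 1) = x i :: window x (i + 1) m := by
  rw [add_comm m, window_add]
  simp [window]

lemma window_succ_right (x : ℤ → A) (i : ℤ) (m : ℕ) :
    window x i (m + 1) = window x i m ++ [x (i + m)] := by
  rw [window_add]
  simp [window]

lemma occursIn_iff_exists_window {w : List A} {x : ℤ → A} :
    occursIn w x ↔ ∃ i, window x i w.length = w :=
  exists_congr fun _ => eq_comm

lemma occursIn.of_infix {u w : List A} {x : ℤ → A} (huw : u <:+: w) (hw : occursIn w x) :
    occursIn u x := by
  obtain ⟨s, t, rfl⟩ := huw
  obtain ⟨i, hi⟩ := occursIn_iff_exists_window.1 hw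
  rw [List.length_append, List.length_append, window_add, window_add] at hi
  exact occursIn_iff_exists_window.2
    ⟨i + s.length, (List.append_inj (List.append_inj hi (by simp)).1 (by simp)).2⟩

variable {X : Set (ℤ → A)}

lemma mem_language_of_infix {u w : List A} (huw : u <:+: w) (hw : w ∈ language X) :
    u ∈ language X := by
  obtain ⟨x, hx, hwx⟩ := hw
  exact ⟨x, hx, hwx.of_infix huw⟩

lemma exists_cons_mem_language {w : List A} (hw : w ∈ language X) :
    ∃ a, a :: w ∈ language X := by
  obtain ⟨x, hx, hwx⟩ := hw
  obtain ⟨i, hi⟩ := occursIn_iff_exists_window.1 hwx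
  refine ⟨x (i - 1), x, hx, occursIn_iff_exists_window.2 ⟨i - 1, ?_⟩⟩
  rw [List.length_cons, window_succ, sub_add_cancel, hi]

lemma exists_append_singleton_mem_language {w : List A} (hw : w ∈ language X) :
    ∃ b, w ++ [b] ∈ language X := by
  obtain ⟨x, hx, hwx⟩ := hw
  obtain ⟨i, hi⟩ := occursIn_iff_exists_window.1 hwx
  refine ⟨x (i + w.length), x, hx, occursIn_iff_exists_window.2 ⟨i, ?_⟩⟩
  rw [List.length_append, List.length_singleton, window_succ_right, hi]

lemma complexity_zero_of_nonempty (hne : X.Nonempty) : complexity X 0 = 1 := by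
  obtain ⟨x, hx⟩ := hne
  have : {w ∈ language X | w.length = 0} = {[]} := by
    ext w
    simp only [Set.mem_ofPred_eq, Set.mem_singleton_iff, List.length_eq_zero_iff,
      and_iff_right_iff_imp]
    rintro rfl
    exact ⟨x, hx, 0, rfl⟩
  rw [complexity, this, Set.ncard_singleton]

end Factors

lemma Set.ncard_eq_ncard_image_snd {α β : Type*} {E : Set (α × β)}
    (h : (Prod.fst '' E).Subsingleton) : E.ncard = (Prod.snd '' E).ncard :=
  (Set.InjOn.ncard_image fun p hp q hq hpq =>
    Prod.ext (h ⟨p, hp, rfl⟩ ⟨q, hq, rfl⟩) hpq).symm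

lemma Set.ncard_eq_ncard_image_fst {α β : Type*} {E : Set (α × β)}
    (h : (Prod.snd '' E).Subsingleton) : E.ncard = (Prod.fst '' E).ncard :=
  (Set.InjOn.ncard_image fun p hp q hq hpq =>
    Prod.ext hpq (h ⟨p, hp, rfl⟩ ⟨q, hq, rfl⟩)).symm

section Extensions

variable {A : Type*} {X : Set (ℤ → A)} {w : List A}

lemma image_fst_extBoth : Prod.fst '' extBoth X w = extLeft X w := by
  ext a
  constructor
  · rintro ⟨⟨a, b⟩, hab, rfl⟩
    exact mem_language_of_infix (List.prefix_append (a :: w) [b]).isInfix hab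
  · intro ha
    obtain ⟨b, hb⟩ := exists_append_singleton_mem_language ha
    exact ⟨(a, b), hb, rfl⟩

lemma image_snd_extBoth : Prod.snd '' extBoth X w = extRight X w := by
  ext b
  constructor
  · rintro ⟨⟨a, b⟩, hab, rfl⟩
    exact mem_language_of_infix (List.suffix_cons a (w ++ [b])).isInfix hab
  · intro hb
    obtain ⟨a, ha⟩ := exists_cons_mem_language hb
    exact ⟨(a, b), ha, rfl⟩

lemma extLeft_nonempty (hw : w ∈ language X) : (extLeft X w).Nonempty :=
  exists_cons_mem_language hw

lemma extRight_nonempty (hw : w ∈ language X) : (extRight X w).Nonempty :=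
  exists_append_singleton_mem_language hw

variable [Finite A]

lemma ncard_extLeft_eq_one (hw : w ∈ language X) (h : ¬LeftSpecial X w) :
    (extLeft X w).ncard = 1 := by
  have := (Set.ncard_pos).2 (extLeft_nonempty hw)
  unfold LeftSpecial at h
  omega

lemma ncard_extRight_eq_one (hw : w ∈ language X) (h : ¬RightSpecial X w) :
    (extRight X w).ncard = 1 := by
  have := (Set.ncard_pos).2 (extRight_nonempty hw)
  unfold RightSpecial at h
  omega

/-- Away from bispecial factors the extension graph is a star, hence a tree. -/
lemma ncard_extBoth_add_one_of_not_bispecial (hw : w ∈ language X) (h : ¬Bispecial X w) :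
    (extBoth X w).ncard + 1 = (extLeft X w).ncard + (extRight X w).ncard := by
  rcases not_and_or.1 h with hL | hR
  · have hL := ncard_extLeft_eq_one hw hL
    have hsub : (Prod.fst '' extBoth X w).Subsingleton := by
      rw [image_fst_extBoth, ← Set.ncard_le_one_iff_subsingleton]; omega
    rw [Set.ncard_eq_ncard_image_snd hsub, image_snd_extBoth, hL, add_comm]
  · have hR := ncard_extRight_eq_one hw hR
    have hsub : (Prod.snd '' extBoth X w).Subsingleton := by
      rw [image_snd_extBoth, ← Set.ncard_le_one_iff_subsingleton]; omega
    rw [Set.ncard_eq_ncard_image_fst hsub, image_fst_extBoth, hR]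

end Extensions

section Counting

variable {A : Type*} [Finite A] (X : Set (ℤ → A))

lemma finite_factors_of_length (n : ℕ) : {w ∈ language X | w.length = n}.Finite :=
  (List.finite_length_eq A n).subset fun _ hw => hw.2

/-- `L_n(X)`. -/
noncomputable def factorsOfLength (n : ℕ) : Finset (List A) :=
  (finite_factors_of_length X n).toFinset

variable {X}

@[simp]
lemma mem_factorsOfLength {n : ℕ} {w : List A} :
    w ∈ factorsOfLength X n ↔ w ∈ language X ∧ w.length = n :=
  Set.Finite.mem_toFinset _

lemma complexity_eq_card (n : ℕ) : complexity X n = (factorsOfLength X n).card :=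
  Set.ncard_eq_toFinset_card _ _

lemma complexity_eq_sum_ncard {α : Type*} {m n : ℕ} (f : List A → List A)
    (g : List A → α → List A) (E : List A → Set α)
    (hf : ∀ u ∈ language X, u.length = m → f u ∈ language X ∧ (f u).length = n)
    (hg : ∀ w, Function.Injective (g w))
    (hfib : ∀ w, w.length = n → {u ∈ language X | u.length = m ∧ f u = w} = g w '' E w) :
    complexity X m = ∑ w ∈ factorsOfLength X n, (E w).ncard := by
  rw [complexity_eq_card, Finset.card_eq_sum_card_fiberwise fun u hu =>
    mem_factorsOfLength.2 (hf u (mem_factorsOfLength.1 hu).1 (mem_factorsOfLength.1 hu).2)]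
  refine Finset.sum_congr rfl fun w hw => ?_
  rw [← Set.ncard_coe_finset, ← (hg w).injOn.ncard_image, ← hfib w (mem_factorsOfLength.1 hw).2]
  congr 1
  ext u
  simp [and_assoc]

lemma complexity_succ_eq_sum_ncard_extRight (n : ℕ) :
    complexity X (n + 1) = ∑ w ∈ factorsOfLength X n, (extRight X w).ncard := by
  refine complexity_eq_sum_ncard List.dropLast (fun w b => w ++ [b]) (extRight X)
    (fun u hu hlen => ⟨mem_language_of_infix (List.dropLast_prefix u).isInfix hu, by simp [hlen]⟩)
    (fun w b c hbc => by simpa using hbc) ?_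
  intro w hw
  ext u
  constructor
  · rintro ⟨hu, hlen, rfl⟩
    have hne : u ≠ [] := List.ne_nil_of_length_eq_add_one hlen
    refine ⟨u.getLast hne, ?_, List.dropLast_append_getLast hne⟩
    show u.dropLast ++ [u.getLast hne] ∈ language X
    rwa [List.dropLast_append_getLast hne]
  · rintro ⟨b, hb, rfl⟩
    exact ⟨hb, by simp [hw], List.dropLast_concat⟩

lemma complexity_succ_eq_sum_ncard_extLeft (n : ℕ) :
    complexity X (n + 1) = ∑ w ∈ factorsOfLength X n, (extLeft X w).ncard := by
  refine complexity_eq_sum_ncard List.tail (fun w a => a :: w) (extLeft X)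
    (fun u hu hlen => ⟨mem_language_of_infix (List.tail_suffix u).isInfix hu, by simp [hlen]⟩)
    (fun w a b hab => by simpa using hab) ?_
  intro w hw
  ext u
  constructor
  · rintro ⟨hu, hlen, rfl⟩
    obtain ⟨a, r, rfl⟩ := List.exists_cons_of_length_eq_add_one hlen
    exact ⟨a, hu, rfl⟩
  · rintro ⟨a, ha, rfl⟩
    exact ⟨ha, by simp [hw], rfl⟩

lemma complexity_add_two_eq_sum_ncard_extBoth (n : ℕ) :
    complexity X (n + 2) = ∑ w ∈ factorsOfLength X n, (extBoth X w).ncard := by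
  refine complexity_eq_sum_ncard (fun u => u.tail.dropLast) (fun w p => p.1 :: (w ++ [p.2]))
    (extBoth X) (fun u hu hlen => ⟨mem_language_of_infix
      ((List.dropLast_prefix _).isInfix.trans (List.tail_suffix u).isInfix) hu, by simp [hlen]⟩)
    (fun w p q hpq => ?_) ?_
  · simp only [List.cons.injEq, List.append_cancel_left_eq, and_true] at hpq
    exact Prod.ext hpq.1 hpq.2
  intro w hw
  ext u
  constructor
  · rintro ⟨hu, hlen, rfl⟩
    obtain ⟨a, r, rfl⟩ := List.exists_cons_of_length_eq_add_one hlen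
    have hne : r ≠ [] := List.ne_nil_of_length_eq_add_one (by simpa using hlen)
    refine ⟨(a, r.getLast hne), ?_, by simp [List.dropLast_append_getLast hne]⟩
    show a :: ((a :: r).tail.dropLast ++ [r.getLast hne]) ∈ language X
    rwa [List.tail_cons, List.dropLast_append_getLast hne]
  · rintro ⟨⟨a, b⟩, hab, rfl⟩
    exact ⟨hab, by simp [hw], by simp⟩

lemma complexity_second_difference (n : ℕ) :
    (complexity X (n + 2) : ℤ) - 2 * complexity X (n + 1) + complexity X n =
      ∑ w ∈ factorsOfLength X n,
        (((extBoth X w).ncard : ℤ) - (extLeft X w).ncard - (extRight X w).ncard + 1) := by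
  rw [two_mul, complexity_eq_card n, complexity_add_two_eq_sum_ncard_extBoth]
  nth_rw 1 [complexity_succ_eq_sum_ncard_extLeft]
  rw [complexity_succ_eq_sum_ncard_extRight]
  simp only [Finset.sum_add_distrib, Finset.sum_sub_distrib, Finset.sum_const, nsmul_one,
    Nat.cast_sum]
  ring

end Counting

lemma Int.eq_add_mul_of_second_difference_eq_zero {u : ℕ → ℤ}
    (h : ∀ n, u (n + 2) - 2 * u (n + 1) + u n = 0)
    (n : ℕ) : u n = u 0 + (u 1 - u 0) * n := by
  have hstep : ∀ n, u (n + 1) - u n = u 1 - u 0 := by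
    intro n
    induction n with
    | zero => rfl
    | succ k ih => linarith [h k]
  induction n with
  | zero => simp
  | succ k ih => push_cast; linarith [hstep k]

theorem statement_1_general {A : Type*} [Fintype A] (X : Set (ℤ → A))
    (hne : X.Nonempty)
    (h : ∀ w ∈ language X, Bispecial X w →
      ((extBoth X w).ncard : ℤ) - (extLeft X w).ncard - (extRight X w).ncard + 1 = 0) :
    ∀ n : ℕ, (complexity X n : ℤ) = ((complexity X 1 : ℤ) - 1) * n + 1 := by
  have hsecond : ∀ n,
      (complexity X (n + 2) : ℤ) - 2 * complexity X (n + 1) + complexity X n = 0 := by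
    intro n
    rw [complexity_second_difference]
    refine Finset.sum_eq_zero fun w hw => ?_
    have hw := (mem_factorsOfLength.1 hw).1
    by_cases hbi : Bispecial X w
    · exact h w hw hbi
    · have := ncard_extBoth_add_one_of_not_bispecial hw hbi
      omega
  intro n
  rw [Int.eq_add_mul_of_second_difference_eq_zero (u := fun k => (complexity X k : ℤ)) hsecond n,
    complexity_zero_of_nonempty hne]
  ring

/-- Proposition 2.1, second part. -/
theorem statement_1 {A : Type*} [Fintype A] (X : Set (ℤ → A)) (hX : IsShiftSpace X)
    (hne : X.Nonempty)
    (h : ∀ w ∈ language X, Bispecial X w →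
      ((extBoth X w).ncard : ℤ) - (extLeft X w).ncard - (extRight X w).ncard + 1 = 0) :
    ∀ n : ℕ, (complexity X n : ℤ) = ((complexity X 1 : ℤ) - 1) * n + 1 :=
  statement_1_general X hne h
end

section
/- Let T : Ω → Ω be a map and let I2 ⊆ I1 ⊆ Ω. Assume that I1 is recurrent for T and that I2 is recurrent for the induced transformation T_{I1}. Then I2 is recurrent for T, and the transformation induced by T_{I1} on I2 coincides with the transformation induced by T on I2, i.e. (T_{I1})_{I2}(x) = T_{I2}(x) for all x ∈ I2. -/
open Classical

/-!
For `x ∈ I₁` the iterates of `T_{I₁}` are `T^{N k} x`, where `N 0 < N 1 < ⋯` are the successive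
times at which the `T`-orbit of `x` visits `I₁`, and every visit time is of this form. As
`I₂ ⊆ I₁`, the first positive time at which the orbit meets `I₂` is some `N k`, and by monotonicity
of `N` the least such `k` is the return time of `x` to `I₂` under `T_{I₁}`.
-/

noncomputable def visitTime {Ω : Type*} (T : Ω → Ω) (I : Set Ω) (x : Ω) : ℕ → ℕ
  | 0 => 0
  | k + 1 => visitTime T I x k + returnTime T I (T^[visitTime T I x k] x)

theorem StrictMono.map_sInf_pos {N : ℕ → ℕ} (hN : StrictMono N) (h0 : N 0 = 0)
    {P : ℕ → Prop} (hP : ∀ n, P n → ∃ k, N k = n) (hne : ∃ k, 0 < k ∧ P (N k)) :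
    N (sInf {k | 0 < k ∧ P (N k)}) = sInf {n | 0 < n ∧ P n} := by
  obtain ⟨hs, hPs⟩ : 0 < sInf {k | 0 < k ∧ P (N k)} ∧ P (N (sInf {k | 0 < k ∧ P (N k)})) :=
    Nat.sInf_mem hne
  have hNs : 0 < N (sInf {k | 0 < k ∧ P (N k)}) := by
    simpa [h0] using hN hs
  refine le_antisymm (le_csInf ⟨_, hNs, hPs⟩ ?_) (Nat.sInf_le ⟨hNs, hPs⟩)
  rintro n ⟨hn, hPn⟩
  obtain ⟨k, rfl⟩ := hP n hPn
  have hk : 0 < k := Nat.pos_of_ne_zero (by rintro rfl; omega)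
  exact hN.monotone (Nat.sInf_le ⟨hk, hPn⟩)

section InducedMap

variable {Ω : Type*} {T : Ω → Ω} {I : Set Ω} {x : Ω}

theorem returnTime_pos_and_mem (hI : RecurrentSet T I) (hx : x ∈ I) :
    0 < returnTime T I x ∧ inducedMap T I x ∈ I :=
  Nat.sInf_mem (hI x hx)

theorem iterate_inducedMap_eq (k : ℕ) :
    (inducedMap T I)^[k] x = T^[visitTime T I x k] x := by
  induction k with
  | zero => rfl
  | succ k ih =>
    rw [Function.iterate_succ_apply', ih, visitTime, add_comm, Function.iterate_add_apply]
    rfl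

theorem iterate_visitTime_mem (hI : RecurrentSet T I) (hx : x ∈ I) (k : ℕ) :
    T^[visitTime T I x k] x ∈ I := by
  rw [← iterate_inducedMap_eq]
  exact Set.MapsTo.iterate (fun _ hy => (returnTime_pos_and_mem hI hy).2) k hx

theorem visitTime_strictMono (hI : RecurrentSet T I) (hx : x ∈ I) :
    StrictMono (visitTime T I x) :=
  strictMono_nat_of_lt_succ fun k =>
    Nat.lt_add_of_pos_right (returnTime_pos_and_mem hI (iterate_visitTime_mem hI hx k)).1

/-- Between two consecutive visits the orbit stays outside `I`, by minimality of return times. -/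
theorem exists_visitTime_eq (hI : RecurrentSet T I) (hx : x ∈ I) {n : ℕ}
    (hnI : T^[n] x ∈ I) : ∃ k, visitTime T I x k = n := by
  rcases Nat.eq_zero_or_pos n with rfl | hn
  · exact ⟨0, rfl⟩
  set N := visitTime T I x
  obtain ⟨k, hlt, hle⟩ : ∃ k, ¬n ≤ N k ∧ n ≤ N (k + 1) :=
    Nat.exists_not_and_succ_of_not_zero_of_exists (by simp [N, visitTime]; omega)
      ⟨n, (visitTime_strictMono hI hx).id_le n⟩
  refine ⟨k + 1, le_antisymm ?_ hle⟩
  have hret : returnTime T I (T^[N k] x) ≤ n - N k := by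
    refine Nat.sInf_le ⟨by omega, ?_⟩
    rwa [← Function.iterate_add_apply, Nat.sub_add_cancel (by omega)]
  change N k + returnTime T I (T^[N k] x) ≤ n
  omega

end InducedMap

/-- Lemma 6.5, composition of induced transformations. -/
theorem statement_19 {Ω : Type*} (T : Ω → Ω) (I₁ I₂ : Set Ω) (h21 : I₂ ⊆ I₁)
    (h1 : RecurrentSet T I₁) (h2 : RecurrentSet (inducedMap T I₁) I₂) :
    RecurrentSet T I₂ ∧
      ∀ x ∈ I₂, inducedMap (inducedMap T I₁) I₂ x = inducedMap T I₂ x := by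
  have hreturn : ∀ x ∈ I₂, ∃ k, 0 < k ∧ T^[visitTime T I₁ x k] x ∈ I₂ := by
    simpa only [RecurrentSet, iterate_inducedMap_eq] using h2
  refine ⟨fun x hx => ?_, fun x hx => ?_⟩
  · obtain ⟨k, hk, hkI⟩ := hreturn x hx
    exact ⟨_, (visitTime_strictMono h1 (h21 hx)).lt_iff_lt.2 hk, hkI⟩
  · have hfirst := (visitTime_strictMono h1 (h21 hx)).map_sInf_pos rfl
      (P := fun n => T^[n] x ∈ I₂)
      (fun n hnI => exists_visitTime_eq h1 (h21 hx) (h21 hnI)) (hreturn x hx)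
    simp only [inducedMap, returnTime, iterate_inducedMap_eq] at hfirst ⊢
    rw [hfirst]
end
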